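/- Let A = P₁ − R₁ + S₁ = P₂ − R₂ + S₂ be two double proper weak regular splittings of A ∈ ℝ^{m×n} such that N(R₂) ⊇ N(P₂), R(R₂) ⊆ R(P₂), I + R₂P₁† is nonsingular, and 𝒜̂† ≥ 0 where 𝒜̂ = (I + R₂P₁†)A. Then ρ(𝒲₁₂) < 1. -/

import Mathlib

open Matrix

noncomputable def specRad {ι : Type*} [Fintype ι] [DecidableEq ι] (M : Matrix ι ι ℝ) : ℝ :=
  sSup ((fun z : ℂ => ‖z‖) '' spectrum ℂ (M.map Complex.ofReal))

def IsMP {m n : ℕ} (A : Matrix (Fin m) (Fin n) ℝ) (X : Matrix (Fin n) (Fin m) ℝ) : Prop :=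
  A * X * A = A ∧ X * A * X = X ∧ (A * X)ᵀ = A * X ∧ (X * A)ᵀ = X * A

def MatLE {m n : ℕ} (A B : Matrix (Fin m) (Fin n) ℝ) : Prop := ∀ i j, A i j ≤ B i j

/-!
Let `H = B + C` be the sum of the two upper blocks of `𝒲₁₂`. An eigenvalue `z` of `𝒲₁₂` with
`|z| ≥ 1` yields, through its eigenvector `(z y, y)`, a nonzero `w = |y| ≥ 0` with `w ≤ H w`.
The Penrose equations together with the range and kernel conditions give
`H = P₂†P₂ - P₂†𝒜̂`, hence `H 𝒜̂† = 𝒜̂† - P₂†` and `H P₂†P₂ = H`. The first identity, with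
`P₂†, 𝒜̂† ≥ 0`, bounds the partial sums of `∑ Hᵏ P₂†` by `𝒜̂†`, so by the second the partial
sums of `∑ Hᵏ` stay bounded, whereas `w ≤ Hᵏ w` for every `k` makes `∑_{k<K} Hᵏ⁺¹ w ≥ K w`.
-/

section NonnegMatrix

variable {ι κ μ : Type*}

lemma Matrix.mul_apply_nonneg [Fintype κ] {M : Matrix ι κ ℝ} {N : Matrix κ μ ℝ}
    (hM : ∀ i j, 0 ≤ M i j) (hN : ∀ i j, 0 ≤ N i j) (i : ι) (j : μ) : 0 ≤ (M * N) i j :=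
  Finset.sum_nonneg fun k _ => mul_nonneg (hM i k) (hN k j)

lemma Matrix.mul_apply_le_mul_apply [Fintype κ] {M : Matrix ι κ ℝ} {N N' : Matrix κ μ ℝ}
    (hM : ∀ i j, 0 ≤ M i j) (hNN' : ∀ i j, N i j ≤ N' i j) (i : ι) (j : μ) :
    (M * N) i j ≤ (M * N') i j :=
  Finset.sum_le_sum fun k _ => mul_le_mul_of_nonneg_left (hNN' k j) (hM i k)

lemma Matrix.mulVec_mono [Fintype κ] {M : Matrix ι κ ℝ} (hM : ∀ i j, 0 ≤ M i j) {u v : κ → ℝ}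
    (huv : u ≤ v) : M *ᵥ u ≤ M *ᵥ v := fun i =>
  Finset.sum_le_sum fun k _ => mul_le_mul_of_nonneg_left (huv k) (hM i k)

lemma Matrix.abs_mulVec_le [Fintype κ] {M Y : Matrix ι κ ℝ} (hMY : ∀ i j, |M i j| ≤ Y i j)
    (u : κ → ℝ) : |M *ᵥ u| ≤ Y *ᵥ |u| := fun i =>
  calc |∑ k, M i k * u k| ≤ ∑ k, |M i k * u k| := Finset.abs_sum_le_sum_abs _ _
    _ ≤ ∑ k, Y i k * |u k| := Finset.sum_le_sum fun k _ => by
      rw [abs_mul]; exact mul_le_mul_of_nonneg_right (hMY i k) (abs_nonneg _)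

lemma Matrix.pow_mul_apply_mem_Icc [Fintype ι] [DecidableEq ι] {H : Matrix ι ι ℝ}
    {Y : Matrix ι κ ℝ} (hH : ∀ i j, 0 ≤ H i j) (hY : ∀ i j, 0 ≤ Y i j)
    (hHY : ∀ i j, (H * Y) i j ≤ Y i j) (k : ℕ) :
    ∀ i j, (H ^ k * Y) i j ∈ Set.Icc 0 (Y i j) := by
  induction k with
  | zero => simpa using fun i j => hY i j
  | succ k ih =>
    intro i j
    rw [pow_succ', Matrix.mul_assoc]
    exact ⟨mul_apply_nonneg hH (fun i j => (ih i j).1) i j,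
      (mul_apply_le_mul_apply hH (fun i j => (ih i j).2) i j).trans (hHY i j)⟩

lemma Matrix.le_pow_mulVec [Fintype ι] [DecidableEq ι] {H : Matrix ι ι ℝ} (hH : ∀ i j, 0 ≤ H i j)
    {w : ι → ℝ} (hw : w ≤ H *ᵥ w) (k : ℕ) : w ≤ H ^ k *ᵥ w := by
  induction k with
  | zero => simp
  | succ k ih => rw [pow_succ', ← mulVec_mulVec]; exact hw.trans (mulVec_mono hH ih)

lemma Matrix.sum_range_pow_succ_eq {R : Type*} [Ring R] [Fintype ι] [Fintype κ] [DecidableEq ι]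
    {H : Matrix ι ι R} {X Y : Matrix ι κ R} {P : Matrix κ ι R} (hHY : H * Y = Y - X)
    (hHXP : H * (X * P) = H) (K : ℕ) :
    ∑ k ∈ Finset.range K, H ^ (k + 1) = (H * Y - H ^ (K + 1) * Y) * P := by
  induction K with
  | zero => simp
  | succ K ih =>
    have hpow : H ^ (K + 1) = H ^ (K + 1) * Y * P - H ^ (K + 2) * Y * P := by
      have hX : X = Y - H * Y := by rw [hHY]; abel
      calc H ^ (K + 1) = H ^ K * (H * (X * P)) := by rw [hHXP, pow_succ]
        _ = _ := by
          simp only [hX, Matrix.sub_mul, Matrix.mul_sub, ← Matrix.mul_assoc, ← pow_succ]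
    rw [Finset.sum_range_succ, ih, Matrix.sub_mul, Matrix.sub_mul]
    nth_rw 2 [hpow]
    abel

theorem Matrix.eq_zero_of_le_mulVec [Fintype ι] [DecidableEq ι] [Fintype κ] {H : Matrix ι ι ℝ}
    {X Y : Matrix ι κ ℝ} {P : Matrix κ ι ℝ} (hH : ∀ i j, 0 ≤ H i j) (hX : ∀ i j, 0 ≤ X i j)
    (hY : ∀ i j, 0 ≤ Y i j) (hHY : H * Y = Y - X) (hHXP : H * (X * P) = H) {w : ι → ℝ}
    (hw : 0 ≤ w) (hwH : w ≤ H *ᵥ w) : w = 0 := by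
  have hIcc := pow_mul_apply_mem_Icc hH hY fun i j => by
    rw [hHY, sub_apply]; exact sub_le_self _ (hX i j)
  have hbound (K : ℕ) : (K : ℝ) • w ≤ Y *ᵥ |P *ᵥ w| :=
    calc (K : ℝ) • w = ∑ k ∈ Finset.range K, w := by
          rw [Finset.sum_const, Finset.card_range, Nat.cast_smul_eq_nsmul]
      _ ≤ ∑ k ∈ Finset.range K, H ^ (k + 1) *ᵥ w :=
        Finset.sum_le_sum fun k _ => le_pow_mulVec hH hwH (k + 1)
      _ = (H * Y - H ^ (K + 1) * Y) *ᵥ (P *ᵥ w) := by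
        rw [← sum_mulVec, sum_range_pow_succ_eq hHY hHXP, mulVec_mulVec]
      _ ≤ |(H * Y - H ^ (K + 1) * Y) *ᵥ (P *ᵥ w)| := le_abs_self _
      _ ≤ Y *ᵥ |P *ᵥ w| := abs_mulVec_le (fun i j => by
        have h1 := hIcc 1 i j
        rw [pow_one] at h1
        exact abs_sub_le_of_nonneg_of_le h1.1 h1.2 (hIcc (K + 1) i j).1 (hIcc (K + 1) i j).2) _
  funext i
  refine le_antisymm (not_lt.mp fun hwi => ?_) (hw i)
  obtain ⟨K, hK⟩ := exists_nat_gt ((Y *ᵥ |P *ᵥ w|) i / w i)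
  have hKi : (K : ℝ) * w i ≤ (Y *ᵥ |P *ᵥ w|) i := hbound K i
  rw [div_lt_iff₀ hwi] at hK
  linarith

lemma Matrix.norm_map_ofReal_mulVec_apply_le [Fintype κ] {M : Matrix ι κ ℝ}
    (hM : ∀ i j, 0 ≤ M i j) (v : κ → ℂ) (i : ι) :
    ‖(M.map Complex.ofReal *ᵥ v) i‖ ≤ (M *ᵥ fun j => ‖v j‖) i :=
  (norm_sum_le _ _).trans_eq <| Finset.sum_congr rfl fun j _ => by
    show ‖(M i j : ℂ) * v j‖ = M i j * ‖v j‖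
    rw [norm_mul, Complex.norm_real, Real.norm_of_nonneg (hM i j)]

end NonnegMatrix

section Spectrum

variable {ι : Type*} [Fintype ι] [DecidableEq ι]

lemma Matrix.exists_mulVec_eq_smul_of_mem_spectrum {K : Type*} [Field K] {M : Matrix ι ι K}
    {z : K} (hz : z ∈ spectrum K M) : ∃ v ≠ 0, M *ᵥ v = z • v := by
  rw [← spectrum_toLin', ← Module.End.hasEigenvalue_iff_mem_spectrum] at hz
  obtain ⟨v, hv, hv0⟩ := hz.exists_hasEigenvector
  exact ⟨v, hv0, by simpa using Module.End.mem_eigenspace_iff.mp hv⟩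

lemma specRad_lt_one_of_forall_norm_lt_one {M : Matrix ι ι ℝ}
    (h : ∀ z ∈ spectrum ℂ (M.map Complex.ofReal), ‖z‖ < 1) : specRad M < 1 := by
  rcases (spectrum ℂ (M.map Complex.ofReal)).eq_empty_or_nonempty with he | hne
  · simp [specRad, he]
  · rw [specRad, Set.Finite.csSup_lt_iff ((finite_spectrum _).image _) (hne.image _)]
    rintro _ ⟨z, hz, rfl⟩
    exact h z hz

lemma exists_le_mulVec_of_mem_spectrum_fromBlocks {B C : Matrix ι ι ℝ} (hB : ∀ i j, 0 ≤ B i j)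
    (hC : ∀ i j, 0 ≤ C i j) {z : ℂ}
    (hz : z ∈ spectrum ℂ ((fromBlocks B C (1 : Matrix ι ι ℝ) 0).map Complex.ofReal))
    (hz1 : 1 ≤ ‖z‖) :
    ∃ w : ι → ℝ, 0 ≤ w ∧ w ≠ 0 ∧ w ≤ (B + C) *ᵥ w := by
  obtain ⟨v, hv0, hv⟩ := exists_mulVec_eq_smul_of_mem_spectrum hz
  rw [fromBlocks_map, Matrix.map_one _ Complex.ofReal_zero Complex.ofReal_one,
    Matrix.map_zero _ Complex.ofReal_zero, fromBlocks_mulVec] at hv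
  set x := v ∘ Sum.inl
  set y := v ∘ Sum.inr
  have hx : x = z • y := funext fun i => by simpa [x, y] using congrFun hv (Sum.inr i)
  have hxy : B.map Complex.ofReal *ᵥ x + C.map Complex.ofReal *ᵥ y = z • x :=
    funext fun i => by simpa [x, y] using congrFun hv (Sum.inl i)
  set w : ι → ℝ := fun i => ‖y i‖
  refine ⟨w, fun i => norm_nonneg _, fun hw => hv0 ?_, fun i => ?_⟩
  · have hy : y = 0 := funext fun i => norm_eq_zero.mp (congrFun hw i)
    ext (i | i)
    · exact (congrFun hx i).trans (by simp [hy])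
    · exact congrFun hy i
  have hzy :
      z * (B.map Complex.ofReal *ᵥ y) i + (C.map Complex.ofReal *ᵥ y) i = z * z * y i := by
    simpa [hx, mulVec_smul, mul_assoc] using congrFun hxy i
  have hzw : ‖z‖ * ‖z‖ * w i ≤ ‖z‖ * (B *ᵥ w) i + (C *ᵥ w) i :=
    calc ‖z‖ * ‖z‖ * w i
        = ‖z * (B.map Complex.ofReal *ᵥ y) i + (C.map Complex.ofReal *ᵥ y) i‖ := by
          rw [hzy, norm_mul, norm_mul]
      _ ≤ ‖z‖ * (B *ᵥ w) i + (C *ᵥ w) i := (norm_add_le _ _).trans <| by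
          rw [norm_mul]
          exact add_le_add (mul_le_mul_of_nonneg_left
            (norm_map_ofReal_mulVec_apply_le hB y i) (norm_nonneg z))
            (norm_map_ofReal_mulVec_apply_le hC y i)
  have hCw : 0 ≤ (C *ᵥ w) i := Finset.sum_nonneg fun j _ => mul_nonneg (hC i j) (norm_nonneg _)
  have hz0 : 0 < ‖z‖ := one_pos.trans_le hz1
  calc w i ≤ ‖z‖ * w i := le_mul_of_one_le_left (norm_nonneg _) hz1
    _ ≤ (B *ᵥ w) i + (C *ᵥ w) i :=
      le_of_mul_le_mul_left (by nlinarith [mul_nonneg (sub_nonneg.2 hz1) hCw]) hz0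
    _ = ((B + C) *ᵥ w) i := by rw [add_mulVec, Pi.add_apply]

theorem specRad_fromBlocks_lt_one {B C : Matrix ι ι ℝ} (hB : ∀ i j, 0 ≤ B i j)
    (hC : ∀ i j, 0 ≤ C i j) (h : ∀ w : ι → ℝ, 0 ≤ w → w ≤ (B + C) *ᵥ w → w = 0) :
    specRad (fromBlocks B C (1 : Matrix ι ι ℝ) 0) < 1 :=
  specRad_lt_one_of_forall_norm_lt_one fun _ hz => not_le.mp fun hz1 =>
    let ⟨w, hw, hw0, hwBC⟩ := exists_le_mulVec_of_mem_spectrum_fromBlocks hB hC hz hz1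
    hw0 (h w hw hwBC)

end Spectrum

section MoorePenrose

open LinearMap (ker range)

variable {ι κ μ : Type*} [Fintype ι] [Fintype κ]

lemma Matrix.mul_mul_eq_right_of_range_le {R : Type*} [CommRing R] [Fintype μ]
    {P : Matrix κ ι R} {X : Matrix ι κ R} {M : Matrix κ μ R} (hP : P * X * P = P)
    (h : range M.mulVecLin ≤ range P.mulVecLin) : P * X * M = M :=
  ext_iff_mulVec.2 fun v => by
    obtain ⟨y, hy : P *ᵥ y = M *ᵥ v⟩ := h ⟨v, rfl⟩
    rw [← mulVec_mulVec, ← hy, mulVec_mulVec, hP]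

lemma Matrix.mul_mul_eq_left_of_ker_le {R : Type*} [CommRing R] {P : Matrix κ ι R}
    {X : Matrix ι κ R} {M : Matrix μ ι R} (hP : P * X * P = P)
    (h : ker P.mulVecLin ≤ ker M.mulVecLin) : M * X * P = M :=
  ext_iff_mulVec.2 fun v => by
    have hv : (X * P) *ᵥ v - v ∈ ker P.mulVecLin := by
      simp [mulVec_sub, mulVec_mulVec, ← Matrix.mul_assoc, hP]
    simpa [mulVec_sub, mulVec_mulVec, sub_eq_zero, Matrix.mul_assoc] using h hv

/-- `J` maps `range A` into itself and is injective, so it maps `range A` onto itself. -/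
lemma Matrix.range_mul_eq_of_range_sub_one_le {K : Type*} [Field K] [DecidableEq κ]
    {J : Matrix κ κ K} {A : Matrix κ ι K} (hJ : IsUnit J)
    (h : range (J - 1).mulVecLin ≤ range A.mulVecLin) :
    range (J * A).mulVecLin = range A.mulVecLin := by
  rw [mulVecLin_mul, LinearMap.range_comp]
  have hle : (range A.mulVecLin).map J.mulVecLin ≤ range A.mulVecLin := by
    rintro _ ⟨a, ha, rfl⟩
    have hJa : J.mulVecLin a = a + (J - 1).mulVecLin a := by
      simp only [mulVecLin_apply, sub_mulVec, one_mulVec]; abel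
    exact hJa ▸ add_mem ha (h ⟨a, rfl⟩)
  exact Submodule.eq_of_le_of_finrank_eq hle
    (Submodule.equivMapOfInjective _ (mulVec_injective_iff_isUnit.2 hJ) _).finrank_eq.symm

variable {k m n : ℕ} {P : Matrix (Fin m) (Fin n) ℝ} {X : Matrix (Fin n) (Fin m) ℝ}

lemma IsMP.mul_mul_eq_of_ker_le {Q : Matrix (Fin k) (Fin n) ℝ} {Y : Matrix (Fin n) (Fin k) ℝ}
    (hX : IsMP P X) (hY : IsMP Q Y) (h : ker P.mulVecLin ≤ ker Q.mulVecLin) :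
    X * P * Y = Y := by
  have hQXP : Q * (X * P) = Q := by
    rw [← Matrix.mul_assoc]; exact mul_mul_eq_left_of_ker_le hX.1 h
  calc X * P * Y = X * P * ((Y * Q)ᵀ * Y) := by rw [hY.2.2.2, hY.2.1]
    _ = (Q * (X * P))ᵀ * Yᵀ * Y := by
      rw [transpose_mul Q, hX.2.2.2, transpose_mul Y]; simp only [Matrix.mul_assoc]
    _ = Y := by rw [hQXP, ← transpose_mul, hY.2.2.2, hY.2.1]

lemma IsMP.mul_mul_eq_of_range_le {Q : Matrix (Fin m) (Fin k) ℝ} {Y : Matrix (Fin k) (Fin m) ℝ}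
    (hX : IsMP P X) (hY : IsMP Q Y) (h : range P.mulVecLin ≤ range Q.mulVecLin) :
    X * Q * Y = X := by
  have hPQY : Pᵀ * (Q * Y) = Pᵀ :=
    calc Pᵀ * (Q * Y) = Pᵀ * (Q * Y)ᵀ := by rw [hY.2.2.1]
      _ = Pᵀ := by rw [← transpose_mul, mul_mul_eq_right_of_range_le hY.1 h]
  calc X * Q * Y = X * (P * X)ᵀ * (Q * Y) := by
        rw [hX.2.2.1, ← Matrix.mul_assoc X P, hX.2.1, Matrix.mul_assoc]
    _ = X * Xᵀ * (Pᵀ * (Q * Y)) := by rw [transpose_mul]; simp only [Matrix.mul_assoc]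
    _ = X := by
      rw [hPQY, Matrix.mul_assoc, ← transpose_mul, hX.2.2.1, ← Matrix.mul_assoc, hX.2.1]

end MoorePenrose

lemma htads_upper_blocks_add_eq {R ι κ : Type*} [CommRing R] [Fintype ι] [Fintype κ]
    [DecidableEq κ] {A P₁ R₁ S₁ P₂ R₂ S₂ : Matrix κ ι R} {X₁ X₂ : Matrix ι κ R}
    (h₁ : A = P₁ - R₁ + S₁) (h₂ : A = P₂ - R₂ + S₂) (hR₂ : R₂ * X₁ * P₁ = R₂) :
    (X₂ * R₂ * X₁ * R₁ - X₂ * S₂) + -(X₂ * R₂ * X₁ * S₁) =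
      X₂ * P₂ - X₂ * ((1 + R₂ * X₁) * A) := by
  rw [Matrix.mul_assoc] at hR₂
  rw [show R₁ = P₁ + S₁ - A by rw [h₁]; abel, show S₂ = A - P₂ + R₂ by rw [h₂]; abel]
  simp only [Matrix.mul_add, Matrix.mul_sub, Matrix.add_mul, Matrix.one_mul, Matrix.mul_assoc,
    hR₂]
  abel

theorem htads_convergence_weak_regular_general {m n : ℕ}
    (A P₁ R₁ S₁ P₂ R₂ S₂ : Matrix (Fin m) (Fin n) ℝ)
    (X₁ X₂ Xcal : Matrix (Fin n) (Fin m) ℝ)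
    (hX₁ : IsMP P₁ X₁)
    (hX₂ : IsMP P₂ X₂)
    (hsplit₁ : A = P₁ - R₁ + S₁)
    (hker₁ : LinearMap.ker (P₁).mulVecLin = LinearMap.ker (A).mulVecLin)
    (hwr₁b : MatLE 0 (X₁ * R₁))
    (hwr₁c : MatLE (X₁ * S₁) 0)
    (hsplit₂ : A = P₂ - R₂ + S₂)
    (hrange₂ : LinearMap.range (P₂).mulVecLin = LinearMap.range (A).mulVecLin)
    (hker₂ : LinearMap.ker (P₂).mulVecLin = LinearMap.ker (A).mulVecLin)
    (hwr₂a : MatLE 0 X₂)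
    (hwr₂b : MatLE 0 (X₂ * R₂))
    (hwr₂c : MatLE (X₂ * S₂) 0)
    (hNR : LinearMap.ker (P₂).mulVecLin ≤ LinearMap.ker (R₂).mulVecLin)
    (hRR : LinearMap.range (R₂).mulVecLin ≤ LinearMap.range (P₂).mulVecLin)
    (hunit : IsUnit (1 + R₂ * X₁))
    (hXcal : IsMP ((1 + R₂ * X₁) * A) Xcal)
    (hXcalpos : MatLE 0 Xcal)
    : specRad (Matrix.fromBlocks (X₂ * R₂ * X₁ * R₁ - X₂ * S₂) (-(X₂ * R₂ * X₁ * S₁)) 1 0) < 1 := by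
  set Â := (1 + R₂ * X₁) * A with hÂ
  have hkerÂ : LinearMap.ker P₂.mulVecLin ≤ LinearMap.ker Â.mulVecLin := by
    rw [hker₂, hÂ, mulVecLin_mul]; exact LinearMap.ker_le_ker_comp _ _
  have hrangeÂ : LinearMap.range P₂.mulVecLin ≤ LinearMap.range Â.mulVecLin := by
    refine (hrange₂.trans (range_mul_eq_of_range_sub_one_le hunit ?_).symm).le
    rw [add_sub_cancel_left, mulVecLin_mul, ← hrange₂]
    exact (LinearMap.range_comp_le_range _ _).trans hRR
  have hH : (X₂ * R₂ * X₁ * R₁ - X₂ * S₂) + -(X₂ * R₂ * X₁ * S₁) = X₂ * P₂ - X₂ * Â :=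
    htads_upper_blocks_add_eq hsplit₁ hsplit₂
      (mul_mul_eq_left_of_ker_le hX₁.1 (hker₁.trans hker₂.symm ▸ hNR))
  have hB : ∀ i j, 0 ≤ (X₂ * R₂ * X₁ * R₁ - X₂ * S₂) i j := fun i j => by
    rw [Matrix.sub_apply, Matrix.mul_assoc (X₂ * R₂)]
    exact sub_nonneg.2 ((hwr₂c i j).trans (mul_apply_nonneg hwr₂b hwr₁b i j))
  have hC : ∀ i j, 0 ≤ (-(X₂ * R₂ * X₁ * S₁)) i j := fun i j => by
    rw [Matrix.mul_assoc (X₂ * R₂), ← Matrix.mul_neg]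
    exact mul_apply_nonneg hwr₂b (fun i j => neg_nonneg.2 (hwr₁c i j)) i j
  have hH0 : ∀ i j, 0 ≤ ((X₂ * R₂ * X₁ * R₁ - X₂ * S₂) + -(X₂ * R₂ * X₁ * S₁)) i j :=
    fun i j => add_nonneg (hB i j) (hC i j)
  refine specRad_fromBlocks_lt_one hB hC fun w hw hwH =>
    eq_zero_of_le_mulVec (P := P₂) hH0 hwr₂a hXcalpos ?_ ?_ hw hwH
  · rw [hH, Matrix.sub_mul, hX₂.mul_mul_eq_of_ker_le hXcal hkerÂ,
      hX₂.mul_mul_eq_of_range_le hXcal hrangeÂ]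
  · rw [hH, Matrix.sub_mul, ← Matrix.mul_assoc, hX₂.2.1, Matrix.mul_assoc X₂,
      ← Matrix.mul_assoc Â, mul_mul_eq_left_of_ker_le hX₂.1 hkerÂ]

theorem htads_convergence_weak_regular {m n : ℕ}
    (A P₁ R₁ S₁ P₂ R₂ S₂ : Matrix (Fin m) (Fin n) ℝ)
    (X₁ X₂ Xcal : Matrix (Fin n) (Fin m) ℝ)
    (hX₁ : IsMP P₁ X₁)
    (hX₂ : IsMP P₂ X₂)
    (hsplit₁ : A = P₁ - R₁ + S₁)
    (hrange₁ : LinearMap.range (P₁).mulVecLin = LinearMap.range (A).mulVecLin)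
    (hker₁ : LinearMap.ker (P₁).mulVecLin = LinearMap.ker (A).mulVecLin)
    (hwr₁a : MatLE 0 X₁)
    (hwr₁b : MatLE 0 (X₁ * R₁))
    (hwr₁c : MatLE (X₁ * S₁) 0)
    (hsplit₂ : A = P₂ - R₂ + S₂)
    (hrange₂ : LinearMap.range (P₂).mulVecLin = LinearMap.range (A).mulVecLin)
    (hker₂ : LinearMap.ker (P₂).mulVecLin = LinearMap.ker (A).mulVecLin)
    (hwr₂a : MatLE 0 X₂)
    (hwr₂b : MatLE 0 (X₂ * R₂))
    (hwr₂c : MatLE (X₂ * S₂) 0)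
    (hNR : LinearMap.ker (P₂).mulVecLin ≤ LinearMap.ker (R₂).mulVecLin)
    (hRR : LinearMap.range (R₂).mulVecLin ≤ LinearMap.range (P₂).mulVecLin)
    (hunit : IsUnit (1 + R₂ * X₁))
    (hXcal : IsMP ((1 + R₂ * X₁) * A) Xcal)
    (hXcalpos : MatLE 0 Xcal)
    : specRad (Matrix.fromBlocks (X₂ * R₂ * X₁ * R₁ - X₂ * S₂) (-(X₂ * R₂ * X₁ * S₁)) 1 0) < 1 :=
  htads_convergence_weak_regular_general A P₁ R₁ S₁ P₂ R₂ S₂ X₁ X₂ Xcal hX₁ hX₂ hsplit₁ hker₁ hwr₁b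
    hwr₁c hsplit₂ hrange₂ hker₂ hwr₂a hwr₂b hwr₂c hNR hRR hunit hXcal hXcalpos
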